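/- arXiv:2303.15884 — 2 statements merged into one kernel-verified Lean document; each statement's English description precedes it below -/
import Mathlib

section
/- Let R be a reduced extended affine root system and let P be any reflectable base for R. Then {ŵ_α : α ∈ P} is a minimal generating set for the conjugation presented group Ŵ: the ŵ_α with α ∈ P generate Ŵ, and for no proper subset Q ⊊ P do the ŵ_α with α ∈ Q generate Ŵ. -/
open Pointwise
open scoped Classical

noncomputable section

namespace EARSPaper

variable {V : Type*} [AddCommGroup V] [Module ℝ V]

/-- The reflection based on `a`: `x ↦ x - (2 B(x,a)/B(a,a)) • a`.
By the division-by-zero convention this is the identity map when `B a a = 0`. -/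
def reflMap (B : LinearMap.BilinForm ℝ V) (a : V) : V →ₗ[ℝ] V :=
  LinearMap.id - ((2 / B a a) • B.flip a).smulRight a

theorem reflMap_apply (B : LinearMap.BilinForm ℝ V) (a x : V) :
    reflMap B a x = x - (2 / B a a * B x a) • a := by
  simp [reflMap, LinearMap.smulRight_apply, LinearMap.smul_apply, smul_eq_mul]

theorem reflMap_invol (B : LinearMap.BilinForm ℝ V) (a x : V) :
    reflMap B a (reflMap B a x) = x := by
  rcases eq_or_ne (B a a) 0 with h | h
  · simp [reflMap_apply, h]
  · rw [reflMap_apply, reflMap_apply]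
    rw [map_sub, map_smul, LinearMap.sub_apply, LinearMap.smul_apply, smul_eq_mul]
    have hs : 2 / B a a * (B x a - 2 / B a a * B x a * B a a) = -(2 / B a a * B x a) := by
      field_simp
      ring
    rw [hs, neg_smul, sub_neg_eq_add, sub_add_cancel]

/-- The reflection based on `a` as a linear automorphism of `V`. -/
def reflEquiv (B : LinearMap.BilinForm ℝ V) (a : V) : V ≃ₗ[ℝ] V :=
  LinearEquiv.ofLinear (reflMap B a) (reflMap B a)
    (LinearMap.ext fun x => reflMap_invol B a x)
    (LinearMap.ext fun x => reflMap_invol B a x)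

@[simp] theorem reflEquiv_apply (B : LinearMap.BilinForm ℝ V) (a x : V) :
    reflEquiv B a x = reflMap B a x := rfl

/-- The set of nonisotropic elements of `R`. -/
def nonIso (B : LinearMap.BilinForm ℝ V) (R : Set V) : Set V := {a ∈ R | B a a ≠ 0}

/-- Connectedness of a set with respect to the form. -/
def IsConnSet (B : LinearMap.BilinForm ℝ V) (P : Set V) : Prop :=
  ¬ ∃ P₁ P₂ : Set V, P₁.Nonempty ∧ P₂.Nonempty ∧ P₁ ∪ P₂ = P ∧ P₁ ∩ P₂ = ∅ ∧
      ∀ a ∈ P₁, ∀ b ∈ P₂, B a b = 0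

/-- Extended affine root system (axioms (R1)-(R6), for a positive semidefinite
symmetric bilinear form). -/
structure IsEARS (B : LinearMap.BilinForm ℝ V) (R : Set V) : Prop where
  symm : ∀ x y : V, B x y = B y x
  posSemidef : ∀ x : V, 0 ≤ B x x
  lattice : ∃ s : Set V, LinearIndependent ℝ ((↑) : s → V) ∧
      Submodule.span ℝ s = ⊤ ∧ AddSubgroup.closure R = AddSubgroup.closure s
  integrality : ∀ a ∈ nonIso B R, ∀ b ∈ nonIso B R, ∃ n : ℤ, 2 * B b a / B a a = (n : ℝ)
  reflInvariant : ∀ a ∈ nonIso B R, ∀ b ∈ R, reflMap B a b ∈ R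
  isoEq : R ∩ (LinearMap.ker B : Set V) =
      (LinearMap.ker B : Set V) ∩ (nonIso B R - nonIso B R)
  notTwice : ∀ a ∈ nonIso B R, (2 : ℝ) • a ∉ R
  conn : IsConnSet B (nonIso B R)

/-- `R` is reduced: no `α, β ∈ R^×` with `α - 2β ∈ V⁰`. -/
def IsReduced (B : LinearMap.BilinForm ℝ V) (R : Set V) : Prop :=
  ¬ ∃ a ∈ nonIso B R, ∃ b ∈ nonIso B R, a - (2 : ℝ) • b ∈ LinearMap.ker B

/-- `R` is simply laced: the form takes a single value on `R^×`. -/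
def IsSimplyLaced (B : LinearMap.BilinForm ℝ V) (R : Set V) : Prop :=
  ∀ a ∈ nonIso B R, ∀ b ∈ nonIso B R, B a a = B b b

/-- The nullity: the dimension of the radical of the form. -/
def nullity (B : LinearMap.BilinForm ℝ V) : ℕ := Module.finrank ℝ ↥(LinearMap.ker B)

/-- The rank: `dim V - nullity`. -/
def rank (B : LinearMap.BilinForm ℝ V) : ℕ := Module.finrank ℝ V - nullity B

/-- The group generated by the reflections `w_a`, `a ∈ P`, acting on `V`. -/
def weylOn (B : LinearMap.BilinForm ℝ V) (P : Set V) : Subgroup (V ≃ₗ[ℝ] V) :=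
  Subgroup.closure (reflEquiv B '' P)

/-- The set `W_P ⬝ P = {w a : w ∈ W_P, a ∈ P}`. -/
def reflOrbit (B : LinearMap.BilinForm ℝ V) (P : Set V) : Set V :=
  {x | ∃ w ∈ weylOn B P, ∃ a ∈ P, w a = x}

/-- `P` is a reflectable set for `R`: `P ⊆ R^×` and `W_P ⬝ P = R^×`. -/
def IsReflSet (B : LinearMap.BilinForm ℝ V) (R P : Set V) : Prop :=
  P ⊆ nonIso B R ∧ reflOrbit B P = nonIso B R

/-- `P` is a reflectable base for `R`. -/
def IsReflBase (B : LinearMap.BilinForm ℝ V) (R P : Set V) : Prop :=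
  IsReflSet B R P ∧ ∀ Q ⊆ P, Q ≠ P → ¬ IsReflSet B R Q

/-- The space `Ṽ = V ⊕ (V⁰)*`. -/
abbrev VT (B : LinearMap.BilinForm ℝ V) : Type _ := V × Module.Dual ℝ ↥(LinearMap.ker B)

/-- The projection of `V` onto the radical `V⁰` along the fixed complement `V̇`. -/
def projRad (B : LinearMap.BilinForm ℝ V) (Vdot : Submodule ℝ V)
    (hc : IsCompl (LinearMap.ker B) Vdot) : V →ₗ[ℝ] ↥(LinearMap.ker B) :=
  (LinearMap.ker B).linearProjOfIsCompl Vdot hc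

/-- The extension of the form `B` to a nondegenerate symmetric bilinear form on
`Ṽ = V ⊕ (V⁰)*`. -/
def formT (B : LinearMap.BilinForm ℝ V) (Vdot : Submodule ℝ V)
    (hc : IsCompl (LinearMap.ker B) Vdot) : LinearMap.BilinForm ℝ (VT B) :=
  LinearMap.mk₂ ℝ
    (fun x y => B x.1 y.1 + y.2 (projRad B Vdot hc x.1) + x.2 (projRad B Vdot hc y.1))
    (fun x x' y => by
      simp only [Prod.fst_add, Prod.snd_add, map_add, LinearMap.add_apply]; ring)
    (fun c x y => by
      simp only [Prod.smul_fst, Prod.smul_snd, map_smul, LinearMap.smul_apply,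
        smul_eq_mul]; ring)
    (fun x y y' => by
      simp only [Prod.fst_add, Prod.snd_add, map_add, LinearMap.add_apply]; ring)
    (fun c x y => by
      simp only [Prod.smul_fst, Prod.smul_snd, map_smul, LinearMap.smul_apply,
        smul_eq_mul]; ring)

/-- The subgroup of `GL(Ṽ)` generated by the reflections based on `(a, 0)`, `a ∈ P`.
For `P = R^×` this is the extended affine Weyl group `W` of `R`. -/
def weylTilde (B : LinearMap.BilinForm ℝ V) (Vdot : Submodule ℝ V)
    (hc : IsCompl (LinearMap.ker B) Vdot) (P : Set V) :
    Subgroup ((VT B) ≃ₗ[ℝ] (VT B)) :=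
  Subgroup.closure ((fun a => reflEquiv (formT B Vdot hc) (a, 0)) '' P)

theorem reflT_mem_weylTilde (B : LinearMap.BilinForm ℝ V) (Vdot : Submodule ℝ V)
    (hc : IsCompl (LinearMap.ker B) Vdot) {P : Set V} {a : V} (ha : a ∈ P) :
    reflEquiv (formT B Vdot hc) (a, 0) ∈ weylTilde B Vdot hc P :=
  Subgroup.subset_closure ⟨a, ha, rfl⟩

/-- The orbit of `a ∈ V ⊆ Ṽ` under the group generated by the reflections based
on the elements of `G`. -/
def orbitT (B : LinearMap.BilinForm ℝ V) (Vdot : Submodule ℝ V)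
    (hc : IsCompl (LinearMap.ker B) Vdot) (G : Set V) (a : V) : Set V :=
  {x | ∃ w ∈ weylTilde B Vdot hc G, w (a, 0) = (x, 0)}

/-- The set `W_G ⬝ P` computed inside `Ṽ`. -/
def dotSetT (B : LinearMap.BilinForm ℝ V) (Vdot : Submodule ℝ V)
    (hc : IsCompl (LinearMap.ker B) Vdot) (G P : Set V) : Set V :=
  {x | ∃ w ∈ weylTilde B Vdot hc G, ∃ a ∈ P, w (a, 0) = (x, 0)}

/-- `R` is a minimal extended affine root system: for every `α ∈ R^×`,
`W_{R^× ∖ Wα}` is a proper subgroup of `W`. -/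
def IsMinimalEARS (B : LinearMap.BilinForm ℝ V) (Vdot : Submodule ℝ V)
    (hc : IsCompl (LinearMap.ker B) Vdot) (R : Set V) : Prop :=
  ∀ a ∈ nonIso B R,
    weylTilde B Vdot hc (nonIso B R \ orbitT B Vdot hc (nonIso B R) a)
      < weylTilde B Vdot hc (nonIso B R)

/-- The defining relators of the conjugation presented group `Ŵ`:
`ŵ_α² = 1` and `ŵ_α ŵ_β ŵ_α = ŵ_{w_α(β)}`, for `α, β ∈ R^×`. -/
def conjRels (B : LinearMap.BilinForm ℝ V) (R : Set V) :
    Set (FreeGroup ↥(nonIso B R)) :=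
  {r | (∃ a : ↥(nonIso B R), r = FreeGroup.of a * FreeGroup.of a) ∨
      (∃ a b c : ↥(nonIso B R), (c : V) = reflMap B (a : V) (b : V) ∧
        r = FreeGroup.of a * FreeGroup.of b * FreeGroup.of a * (FreeGroup.of c)⁻¹)}

/-- The conjugation presented group `Ŵ` associated with `R`. -/
abbrev WHat (B : LinearMap.BilinForm ℝ V) (R : Set V) := PresentedGroup (conjRels B R)

/-- The generator `ŵ_α` of `Ŵ`. -/
def wHat (B : LinearMap.BilinForm ℝ V) (R : Set V) (a : ↥(nonIso B R)) : WHat B R :=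
  PresentedGroup.of a

/-- `W` has the presentation by conjugation: the canonical epimorphism
`ψ : Ŵ → W`, `ŵ_α ↦ w_α` is an isomorphism. -/
def HasPresByConj (B : LinearMap.BilinForm ℝ V) (Vdot : Submodule ℝ V)
    (hc : IsCompl (LinearMap.ker B) Vdot) (R : Set V) : Prop :=
  ∃ ψ : WHat B R →* ↥(weylTilde B Vdot hc (nonIso B R)),
    (∀ a : ↥(nonIso B R),
      ((ψ (wHat B R a) : (VT B) ≃ₗ[ℝ] (VT B))) =
        reflEquiv (formT B Vdot hc) ((a : V), 0)) ∧
    Function.Bijective ψ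

/-- The restriction of the form to a subspace. -/
def restrictForm (B : LinearMap.BilinForm ℝ V) (U : Submodule ℝ V) :
    LinearMap.BilinForm ℝ ↥U := B.compl₁₂ U.subtype U.subtype

/-- The root system `R_P = R_P^n ∪ R_P^i` associated with a subset `P ⊆ R^×`,
where `R_P^n = W_P ⬝ P` and `R_P^i = (R_P^n - R_P^n) ∩ R⁰`. -/
def earsOf (B : LinearMap.BilinForm ℝ V) (R P : Set V) : Set V :=
  reflOrbit B P ∪
    ((reflOrbit B P - reflOrbit B P) ∩ (R ∩ (LinearMap.ker B : Set V)))

/-- The subgroup `2⟨R⟩` of `⟨R⟩`. -/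
def twoLat (R : Set V) : AddSubgroup V :=
  AddSubgroup.map (AddMonoidHom.mk' (fun x : V => x + x) (fun a b => by abel))
    (AddSubgroup.closure R)



section AuxLemmas

variable (B : LinearMap.BilinForm ℝ V) {R : Set V}

theorem B_reflMap (hsymm : ∀ x y : V, B x y = B y x) (a x y : V) :
    B (reflMap B a x) (reflMap B a y) = B x y := by
  rcases eq_or_ne (B a a) 0 with h | h
  · simp [reflMap_apply, h]
  · rw [reflMap_apply, reflMap_apply]
    simp only [map_sub, map_smul, LinearMap.sub_apply, LinearMap.smul_apply, smul_eq_mul]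
    rw [hsymm a y]
    field_simp
    ring

theorem reflMap_conj (hsymm : ∀ x y : V, B x y = B y x) (a b x : V) :
    reflMap B a (reflMap B b (reflMap B a x)) = reflMap B (reflMap B a b) x := by
  have hcc : B (reflMap B a b) (reflMap B a b) = B b b := B_reflMap B hsymm a b b
  have hyb : B (reflMap B a x) b = B x (reflMap B a b) := by
    conv_lhs => rw [← reflMap_invol B a b]
    rw [B_reflMap B hsymm]
  rw [reflMap_apply B b (reflMap B a x), map_sub, map_smul, reflMap_invol, hyb,
    reflMap_apply B (reflMap B a b) x, hcc]

theorem reflEquiv_sq (a : V) : reflEquiv B a * reflEquiv B a = 1 := by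
  refine LinearEquiv.ext fun x => ?_
  change reflEquiv B a (reflEquiv B a x) = x
  rw [reflEquiv_apply, reflEquiv_apply, reflMap_invol]

theorem reflEquiv_inv (a : V) : (reflEquiv B a)⁻¹ = reflEquiv B a :=
  inv_eq_of_mul_eq_one_right (reflEquiv_sq B a)

theorem lin_mul_apply (e f : V ≃ₗ[ℝ] V) (x : V) : (e * f) x = e (f x) := rfl

theorem lin_inv_apply (e : V ≃ₗ[ℝ] V) (x : V) : e⁻¹ (e x) = x := e.symm_apply_apply x

theorem lin_apply_inv (e : V ≃ₗ[ℝ] V) (x : V) : e (e⁻¹ x) = x := e.apply_symm_apply x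

theorem reflMap_mem_nonIso (hR : IsEARS B R) {a x : V} (ha : a ∈ nonIso B R)
    (hx : x ∈ nonIso B R) : reflMap B a x ∈ nonIso B R :=
  ⟨hR.reflInvariant a ha x hx.1, by rw [B_reflMap B hR.symm]; exact hx.2⟩

theorem weylOn_iff (hR : IsEARS B R) {P' : Set V} (hP' : P' ⊆ nonIso B R) {w : V ≃ₗ[ℝ] V}
    (hw : w ∈ weylOn B P') (x : V) : x ∈ nonIso B R ↔ w x ∈ nonIso B R := by
  refine Subgroup.closure_induction
    (p := fun g _ => ∀ x, (x ∈ nonIso B R ↔ g x ∈ nonIso B R)) ?_ ?_ ?_ ?_ hw x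
  · rintro g ⟨a, haP, rfl⟩ x
    constructor
    · intro hx
      rw [reflEquiv_apply]
      exact reflMap_mem_nonIso B hR (hP' haP) hx
    · intro hx
      rw [reflEquiv_apply] at hx
      have := reflMap_mem_nonIso B hR (hP' haP) hx
      rwa [reflMap_invol] at this
  · intro x; exact Iff.rfl
  · intro g h _ _ ihg ihh x
    exact (ihh x).trans (ihg (h x))
  · intro g _ ihg x
    have := (ihg (g⁻¹ x)).symm
    rwa [lin_apply_inv] at this

theorem wHat_braid (hR : IsEARS B R) {a b : V} (ha : a ∈ nonIso B R) (hb : b ∈ nonIso B R) :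
    wHat B R ⟨a, ha⟩ * wHat B R ⟨b, hb⟩ * wHat B R ⟨a, ha⟩ =
      wHat B R ⟨reflMap B a b, reflMap_mem_nonIso B hR ha hb⟩ := by
  have hrel : FreeGroup.of (⟨a, ha⟩ : ↥(nonIso B R)) * FreeGroup.of ⟨b, hb⟩ *
      FreeGroup.of ⟨a, ha⟩ *
      (FreeGroup.of (⟨reflMap B a b, reflMap_mem_nonIso B hR ha hb⟩ : ↥(nonIso B R)))⁻¹ ∈
      conjRels B R :=
    Or.inr ⟨⟨a, ha⟩, ⟨b, hb⟩, ⟨reflMap B a b, reflMap_mem_nonIso B hR ha hb⟩, rfl, rfl⟩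
  have h1 : PresentedGroup.mk (conjRels B R)
      (FreeGroup.of (⟨a, ha⟩ : ↥(nonIso B R)) * FreeGroup.of ⟨b, hb⟩ * FreeGroup.of ⟨a, ha⟩ *
        (FreeGroup.of (⟨reflMap B a b, reflMap_mem_nonIso B hR ha hb⟩ : ↥(nonIso B R)))⁻¹) = 1 :=
    (QuotientGroup.eq_one_iff _).mpr (Subgroup.subset_normalClosure hrel)
  rw [map_mul, map_mul, map_inv, mul_inv_eq_one] at h1
  exact h1

/-- The reflection equivalence relation on `V`. -/
def ReflRel (B : LinearMap.BilinForm ℝ V) (R : Set V) : V → V → Prop :=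
  fun x y => ∃ a ∈ nonIso B R, reflMap B a x = y

theorem eqvGen_orbit {x y : V} (hx : Relation.EqvGen (ReflRel B R) x y) :
    ∃ w ∈ weylOn B (nonIso B R), w x = y := by
  induction hx with
  | rel x y h =>
    obtain ⟨a, ha, rfl⟩ := h
    exact ⟨reflEquiv B a, Subgroup.subset_closure ⟨a, ha, rfl⟩, rfl⟩
  | refl x => exact ⟨1, one_mem _, rfl⟩
  | symm x y h ih =>
    obtain ⟨w, hw, rfl⟩ := ih
    exact ⟨w⁻¹, inv_mem hw, lin_inv_apply w x⟩
  | trans x y z h1 h2 ih1 ih2 =>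
    obtain ⟨w1, hw1, rfl⟩ := ih1
    obtain ⟨w2, hw2, rfl⟩ := ih2
    exact ⟨w2 * w1, mul_mem hw2 hw1, rfl⟩

/-- The parity function underlying the homomorphism `χ`. -/
def chiFun (B : LinearMap.BilinForm ℝ V) (R : Set V) :
    ↥(nonIso B R) → Multiplicative (Quot (ReflRel B R) → ZMod 2) :=
  fun a => Multiplicative.ofAdd
    (fun t => if t = Quot.mk (ReflRel B R) (a : V) then (1 : ZMod 2) else 0)

theorem chiFun_sq (a : ↥(nonIso B R)) : chiFun B R a * chiFun B R a = 1 := by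
  show Multiplicative.ofAdd _ * Multiplicative.ofAdd _ = 1
  rw [← ofAdd_add, ← ofAdd_zero]
  congr 1
  funext t
  simp only [Pi.add_apply, Pi.zero_apply]
  split_ifs <;> decide

/-- The parity homomorphism `χ : Ŵ → (ℤ/2)^(R^×/∼)`. -/
def chiHom (B : LinearMap.BilinForm ℝ V) (R : Set V) :
    WHat B R →* Multiplicative (Quot (ReflRel B R) → ZMod 2) :=
  PresentedGroup.toGroup (f := chiFun B R) (by
    rintro r (⟨a, rfl⟩ | ⟨a, b, c, hc, rfl⟩)
    · simp only [map_mul, FreeGroup.lift_apply_of]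
      exact chiFun_sq B a
    · simp only [map_mul, map_inv, FreeGroup.lift_apply_of]
      have hfc : chiFun B R c = chiFun B R b := by
        unfold chiFun
        have hq : Quot.mk (ReflRel B R) (c : V) = Quot.mk (ReflRel B R) (b : V) :=
          (Quot.sound ⟨(a : V), a.2, hc.symm⟩).symm
        rw [hq]
      rw [hfc, mul_comm (chiFun B R a) (chiFun B R b), mul_assoc (chiFun B R b),
        chiFun_sq B a, mul_one, mul_inv_cancel])

/-- The canonical homomorphism `π : Ŵ → GL(V)`, `ŵ_α ↦ w_α`. -/
def piHom (B : LinearMap.BilinForm ℝ V) (R : Set V) (hR : IsEARS B R) :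
    WHat B R →* (V ≃ₗ[ℝ] V) :=
  PresentedGroup.toGroup (f := fun a : ↥(nonIso B R) => reflEquiv B (a : V)) (by
    rintro r (⟨a, rfl⟩ | ⟨a, b, c, hc, rfl⟩)
    · simp only [map_mul, FreeGroup.lift_apply_of]
      exact reflEquiv_sq B (a : V)
    · simp only [map_mul, map_inv, FreeGroup.lift_apply_of]
      rw [reflEquiv_inv]
      refine LinearEquiv.ext fun x => ?_
      change reflEquiv B (a : V) (reflEquiv B (b : V) (reflEquiv B (a : V)
        (reflEquiv B (c : V) x))) = x
      simp only [reflEquiv_apply]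
      rw [reflMap_conj B hR.symm, ← hc, reflMap_invol])

theorem chiHom_of (a : ↥(nonIso B R)) : chiHom B R (wHat B R a) = chiFun B R a := by
  unfold chiHom wHat
  exact PresentedGroup.toGroup.of _

theorem piHom_of (hR : IsEARS B R) (a : ↥(nonIso B R)) :
    piHom B R hR (wHat B R a) = reflEquiv B (a : V) := by
  unfold piHom wHat
  exact PresentedGroup.toGroup.of _

theorem wHat_mem_iff (hR : IsEARS B R) {P' : Set V} (hP' : P' ⊆ nonIso B R) {w : V ≃ₗ[ℝ] V}
    (hw : w ∈ weylOn B P') :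
    ∀ x (hx : x ∈ nonIso B R) (hwx : w x ∈ nonIso B R),
      (wHat B R ⟨x, hx⟩ ∈
          Subgroup.closure ((fun a : ↥(nonIso B R) => wHat B R a) '' {a | (a : V) ∈ P'}) ↔
        wHat B R ⟨w x, hwx⟩ ∈
          Subgroup.closure ((fun a : ↥(nonIso B R) => wHat B R a) '' {a | (a : V) ∈ P'})) := by
  set H := Subgroup.closure ((fun a : ↥(nonIso B R) => wHat B R a) '' {a | (a : V) ∈ P'}) with hH
  refine Subgroup.closure_induction
    (p := fun g _ => ∀ x (hx : x ∈ nonIso B R) (hwx : g x ∈ nonIso B R),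
      (wHat B R ⟨x, hx⟩ ∈ H ↔ wHat B R ⟨g x, hwx⟩ ∈ H)) ?_ ?_ ?_ ?_ hw
  · rintro g ⟨p, hpP, rfl⟩ x hx hwx
    have hpN : p ∈ nonIso B R := hP' hpP
    have hHp : wHat B R ⟨p, hpN⟩ ∈ H := Subgroup.subset_closure ⟨⟨p, hpN⟩, hpP, rfl⟩
    have hb := wHat_braid B hR hpN hx
    have he : (⟨reflMap B p x, reflMap_mem_nonIso B hR hpN hx⟩ : ↥(nonIso B R)) =
        ⟨reflEquiv B p x, hwx⟩ := Subtype.ext (reflEquiv_apply B p x).symm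
    rw [he] at hb
    constructor
    · intro h
      rw [← hb]
      exact mul_mem (mul_mem hHp h) hHp
    · intro h
      have hx' : wHat B R ⟨x, hx⟩ = (wHat B R ⟨p, hpN⟩)⁻¹ * wHat B R ⟨reflEquiv B p x, hwx⟩ *
          (wHat B R ⟨p, hpN⟩)⁻¹ := by
        rw [← hb]; group
      rw [hx']
      exact mul_mem (mul_mem (inv_mem hHp) h) (inv_mem hHp)
  · intro x hx hwx
    have he : (⟨(1 : V ≃ₗ[ℝ] V) x, hwx⟩ : ↥(nonIso B R)) = ⟨x, hx⟩ := Subtype.ext rfl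
    rw [he]
  · intro g h hg hh ihg ihh x hx hwx
    have hhx : h x ∈ nonIso B R := (weylOn_iff B hR hP' hh x).1 hx
    exact (ihh x hx hhx).trans (ihg (h x) hhx hwx)
  · intro g _ ihg x hx hwx
    have h1 : g (g⁻¹ x) ∈ nonIso B R := (lin_apply_inv g x).symm ▸ hx
    have h2 := (ihg (g⁻¹ x) hwx h1).symm
    have he : (⟨g (g⁻¹ x), h1⟩ : ↥(nonIso B R)) = ⟨x, hx⟩ := Subtype.ext (lin_apply_inv g x)
    rwa [he] at h2

end AuxLemmas

/-- For any reflectable base `P` of a reduced extended affine root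
system `R`, the set `{ŵ_α : α ∈ P}` is a minimal generating set for the
conjugation presented group `Ŵ`. -/
theorem reflBase_minimal_generating_set_WHat
    {V : Type*} [AddCommGroup V] [Module ℝ V] [FiniteDimensional ℝ V]
    (B : LinearMap.BilinForm ℝ V) (R : Set V) (hR : IsEARS B R) (hred : IsReduced B R)
    (P : Set V) (hP : IsReflBase B R P) :
    Subgroup.closure ((fun a : ↥(nonIso B R) => wHat B R a) '' {a | (a : V) ∈ P}) = ⊤ ∧
    ∀ Q ⊆ P, Q ≠ P →
      Subgroup.closure ((fun a : ↥(nonIso B R) => wHat B R a) '' {a | (a : V) ∈ Q}) ≠ ⊤ := by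
  have hPN : P ⊆ nonIso B R := hP.1.1
  constructor
  · -- generation
    set H := Subgroup.closure ((fun a : ↥(nonIso B R) => wHat B R a) '' {a | (a : V) ∈ P}) with hH
    rw [eq_top_iff, ← PresentedGroup.closure_range_of (conjRels B R), Subgroup.closure_le]
    rintro g ⟨a, rfl⟩
    have ha : (a : V) ∈ reflOrbit B P := by rw [hP.1.2]; exact a.2
    obtain ⟨w, hw, p, hp, hwp⟩ := ha
    have hpN : p ∈ nonIso B R := hPN hp
    have hwpN : w p ∈ nonIso B R := hwp ▸ a.2
    have hmem : wHat B R ⟨p, hpN⟩ ∈ H := Subgroup.subset_closure ⟨⟨p, hpN⟩, hp, rfl⟩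
    have h2 := (wHat_mem_iff B hR hPN hw p hpN hwpN).1 hmem
    have he : (⟨w p, hwpN⟩ : ↥(nonIso B R)) = a := Subtype.ext hwp
    rw [he] at h2
    exact h2
  · -- minimality
    intro Q hQP hQne hQtop
    have hQN : Q ⊆ nonIso B R := fun x hx => hPN (hQP hx)
    refine hP.2 Q hQP hQne ⟨hQN, ?_⟩
    apply Set.Subset.antisymm
    · rintro x ⟨w, hw, q, hq, rfl⟩
      exact (weylOn_iff B hR hQN hw q).1 (hQN hq)
    · intro b hb
      -- The full reflection group equals `W_Q`.
      have hWle : weylOn B (nonIso B R) ≤ weylOn B Q := by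
        have hmap : Subgroup.map (piHom B R hR) ⊤ = weylOn B Q := by
          rw [← hQtop, MonoidHom.map_closure]
          unfold weylOn
          congr 1
          ext g
          constructor
          · rintro ⟨_, ⟨a, haQ, rfl⟩, rfl⟩
            exact ⟨(a : V), haQ, (piHom_of B hR a).symm⟩
          · rintro ⟨x, hxQ, rfl⟩
            exact ⟨wHat B R ⟨x, hQN hxQ⟩, ⟨⟨x, hQN hxQ⟩, hxQ, rfl⟩, piHom_of B hR _⟩
        have hle : weylOn B (nonIso B R) ≤ Subgroup.map (piHom B R hR) ⊤ := by
          unfold weylOn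
          rw [Subgroup.closure_le]
          rintro g ⟨x, hx, rfl⟩
          exact ⟨wHat B R ⟨x, hx⟩, Subgroup.mem_top _, piHom_of B hR _⟩
        exact hmap ▸ hle
      -- Parity argument: `b` is reflection-equivalent to some `q ∈ Q`.
      have hmemχ : chiHom B R (wHat B R ⟨b, hb⟩) ∈ Subgroup.closure
          ((fun a : ↥(nonIso B R) => chiHom B R (wHat B R a)) '' {a | (a : V) ∈ Q}) := by
        have h0 : wHat B R ⟨b, hb⟩ ∈
            Subgroup.closure ((fun a : ↥(nonIso B R) => wHat B R a) '' {a | (a : V) ∈ Q}) := by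
          rw [hQtop]; exact Subgroup.mem_top _
        have h2 := Subgroup.mem_map_of_mem (chiHom B R) h0
        rw [MonoidHom.map_closure, Set.image_image] at h2
        exact h2
      have hsupp : ∀ g ∈ Subgroup.closure
          ((fun a : ↥(nonIso B R) => chiHom B R (wHat B R a)) '' {a | (a : V) ∈ Q}),
          ∀ t, (Multiplicative.toAdd g : Quot (ReflRel B R) → ZMod 2) t ≠ 0 → ∃ q ∈ Q, t = Quot.mk (ReflRel B R) q := by
        intro g hg
        refine Subgroup.closure_induction
          (p := fun g _ => ∀ t, (Multiplicative.toAdd g : Quot (ReflRel B R) → ZMod 2) t ≠ 0 →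
            ∃ q ∈ Q, t = Quot.mk (ReflRel B R) q) ?_ ?_ ?_ ?_ hg
        · rintro g ⟨a, haQ, rfl⟩ t ht
          simp only [chiHom_of] at ht
          by_cases hcase : t = Quot.mk (ReflRel B R) (a : V)
          · exact ⟨(a : V), haQ, hcase⟩
          · exfalso; apply ht; simp [chiFun, hcase]
        · intro t ht; simp at ht
        · intro g h _ _ ihg ihh t ht
          rw [toAdd_mul] at ht
          by_cases hgt : (Multiplicative.toAdd g : Quot (ReflRel B R) → ZMod 2) t = 0
          · refine ihh t fun h0 => ht ?_
            simp [Pi.add_apply, hgt, h0]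
          · exact ihg t hgt
        · intro g _ ihg t ht
          refine ihg t fun h0 => ht ?_
          rw [toAdd_inv]
          simp [h0]
      have hb1 : (Multiplicative.toAdd (chiHom B R (wHat B R ⟨b, hb⟩)) :
          Quot (ReflRel B R) → ZMod 2) (Quot.mk (ReflRel B R) b) ≠ 0 := by
        rw [chiHom_of B (⟨b, hb⟩ : ↥(nonIso B R))]
        simp [chiFun]
      obtain ⟨q, hqQ, hqt⟩ := hsupp _ hmemχ (Quot.mk (ReflRel B R) b) hb1
      have heqv : Relation.EqvGen (ReflRel B R) b q := Quot.eq.mp hqt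
      obtain ⟨w, hw, hwb⟩ := eqvGen_orbit B heqv
      exact ⟨w⁻¹, hWle (inv_mem hw), q, hqQ, by rw [← hwb]; exact lin_inv_apply w b⟩


end EARSPaper
end
end

section
/- Let R be a reduced extended affine root system of rank ℓ and nullity ν, and suppose P is a reflectable base for R with |P| = ℓ + ν. Then P is a minimal reflectable base: no proper subset Q ⊊ P satisfies W_Q = W. -/
open Pointwise
open scoped Classical

noncomputable section

namespace EARSPaper

variable {V : Type*} [AddCommGroup V] [Module ℝ V]

/-- A reflectable base of cardinality `ℓ + ν` is a minimal
reflectable base: no proper subset generates the Weyl group. -/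
theorem reflBase_card_rank_add_nullity_sMinimal
    {V : Type*} [AddCommGroup V] [Module ℝ V] [FiniteDimensional ℝ V]
    (B : LinearMap.BilinForm ℝ V) (R : Set V) (hR : IsEARS B R) (hred : IsReduced B R)
    (Vdot : Submodule ℝ V) (hc : IsCompl (LinearMap.ker B) Vdot)
    (P : Set V) (hP : IsReflBase B R P)
    (hcard : P.encard = ((rank B + nullity B : ℕ) : ℕ∞)) :
    ∀ Q ⊆ P, Q ≠ P → weylTilde B Vdot hc Q ≠ weylTilde B Vdot hc (nonIso B R) := by
  intro Q hQP hQne hW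
  -- basic numerology
  have hν : nullity B ≤ Module.finrank ℝ V := Submodule.finrank_le _
  have hsum : rank B + nullity B = Module.finrank ℝ V := Nat.sub_add_cancel hν
  have hPfin : P.Finite := Set.finite_of_encard_eq_coe hcard
  have hQfin : Q.Finite := hPfin.subset hQP
  set U : Submodule ℝ V := Submodule.span ℝ Q with hU
  -- every element of `weylTilde Q` moves any vector by an element of `U × 0`
  have key : ∀ w ∈ weylTilde B Vdot hc Q, ∀ x : VT B, (((w : VT B ≃ₗ[ℝ] VT B) x - x).1 ∈ U) := by
    intro w hw
    refine Subgroup.closure_induction ?_ ?_ ?_ ?_ hw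
    · rintro _ ⟨q, hq, rfl⟩ x
      have : (reflEquiv (formT B Vdot hc) ((q : V), 0)) x - x
          = -((2 / (formT B Vdot hc) (q, 0) (q, 0) * (formT B Vdot hc) x (q, 0)) • ((q : V), (0 : Module.Dual ℝ ↥(LinearMap.ker B)))) := by
        rw [reflEquiv_apply, reflMap_apply]; abel
      rw [this]
      simpa using U.smul_mem _ (U.neg_mem (Submodule.subset_span hq))
    · intro x; simpa using U.zero_mem
    · intro w₁ w₂ _ _ h₁ h₂ x
      have heq : ((w₁ * w₂) x - x)
          = (w₁ (w₂ x) - w₂ x) + (w₂ x - x) := by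
        show (w₁ (w₂ x) - x) = _
        abel
      rw [heq, Prod.fst_add]
      exact U.add_mem (h₁ _) (h₂ x)
    · intro w₀ _ h x
      have heq : (w₀⁻¹ x - x) = -(w₀ (w₀⁻¹ x) - w₀⁻¹ x) := by
        have hxx : w₀ (w₀⁻¹ x) = x := w₀.apply_symm_apply x
        rw [hxx]
        abel
      rw [heq, Prod.fst_neg]
      exact U.neg_mem (h _)
  -- hence every nonisotropic root lies in `U`
  have h2 : nonIso B R ⊆ (U : Set V) := by
    intro a ha
    have hwmem : reflEquiv (formT B Vdot hc) (a, 0) ∈ weylTilde B Vdot hc Q := by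
      rw [hW]; exact reflT_mem_weylTilde B Vdot hc ha
    have hform : (formT B Vdot hc) ((a : V), (0 : Module.Dual ℝ ↥(LinearMap.ker B))) (a, 0) = B a a := by
      simp [formT, projRad]
    have hx := key _ hwmem (a, 0)
    have hcalc : ((reflEquiv (formT B Vdot hc) (a, 0)) ((a : V), (0 : Module.Dual ℝ ↥(LinearMap.ker B))) - (a, 0)).1
        = -(2 : ℝ) • a := by
      rw [reflEquiv_apply, reflMap_apply, hform, div_mul_cancel₀ 2 ha.2]
      simp
    rw [hcalc] at hx
    have := U.smul_mem (-(1/2) : ℝ) hx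
    simpa [smul_smul] using this
  -- isotropic roots are in the radical, hence differences of nonisotropic roots
  have h3 : R ⊆ (U : Set V) := by
    intro a haR
    by_cases h0 : B a a = 0
    · have hker : a ∈ LinearMap.ker B := by
        rw [LinearMap.mem_ker]
        ext y
        simp only [LinearMap.zero_apply]
        by_contra hne
        set c := B a y with hcdef
        have hsymm := hR.symm a y
        have hpos := hR.posSemidef (y + (-(B y y + 1) / (2 * c)) • a)
        set t := (-(B y y + 1) / (2 * c)) with ht
        have hexp : B (y + t • a) (y + t • a) = B y y + 2 * t * c := by
          simp only [map_add, map_smul, LinearMap.add_apply, LinearMap.smul_apply, smul_eq_mul, h0]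
          rw [hR.symm y a]
          ring
        rw [hexp, ht] at hpos
        have hval : 2 * (-((B y) y + 1) / (2 * c)) * c = -((B y) y + 1) := by
          field_simp
        rw [hval] at hpos
        linarith
      have : a ∈ R ∩ (LinearMap.ker B : Set V) := ⟨haR, hker⟩
      rw [hR.isoEq] at this
      obtain ⟨-, b, hb, c, hcm, rfl⟩ := this
      exact U.sub_mem (h2 hb) (h2 hcm)
    · exact h2 ⟨haR, h0⟩
  -- the span of `R` is everything
  have hspanR : Submodule.span ℝ R = ⊤ := by
    obtain ⟨s, hind, hspan, hclos⟩ := hR.lattice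
    have hs : s ⊆ (Submodule.span ℝ R : Set V) := by
      intro x hx
      have hx1 : x ∈ AddSubgroup.closure R := by
        rw [hclos]; exact AddSubgroup.subset_closure hx
      have hle : AddSubgroup.closure R ≤ (Submodule.span ℝ R).toAddSubgroup :=
        AddSubgroup.closure_le _ |>.2 Submodule.subset_span
      exact hle hx1
    rw [eq_top_iff, ← hspan]
    exact Submodule.span_le.2 hs
  have hUtop : U = ⊤ := by
    rw [eq_top_iff, ← hspanR]
    exact Submodule.span_le.2 h3
  -- dimension count
  have hdim : Module.finrank ℝ V ≤ Q.ncard := by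
    have : Submodule.span ℝ (hQfin.toFinset : Set V) = ⊤ := by
      rw [Set.Finite.coe_toFinset]; exact hUtop
    have h1 : Module.finrank ℝ (Submodule.span ℝ ((hQfin.toFinset : Finset V) : Set V)) ≤ hQfin.toFinset.card :=
      finrank_span_finset_le_card (R := ℝ) hQfin.toFinset
    rw [this, finrank_top] at h1
    rwa [Set.ncard_eq_toFinset_card Q hQfin] at *
  have hPcard : P.ncard = Module.finrank ℝ V := by
    have : P.encard = ((Module.finrank ℝ V : ℕ) : ℕ∞) := by rw [hcard, hsum]
    have := congrArg ENat.toNat this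
    simpa [Set.ncard] using this
  have hlt : Q.ncard < P.ncard := Set.ncard_lt_ncard ⟨hQP, fun h => hQne (subset_antisymm hQP h)⟩ hPfin
  omega


end EARSPaper
end
end
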